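/- Let f and g be monic coprime integer polynomials of positive degree, deg(f) = m, deg(g) = n. Then |Res(f,g)| divides B(f,g)^{min(m,n)}. -/

import Mathlib

open Polynomial

/-- The Sylvester matrix of two integer polynomials. -/
noncomputable def sylvesterMatrix (f g : Polynomial ℤ) :
    Matrix (Fin (g.natDegree + f.natDegree)) (Fin (g.natDegree + f.natDegree)) ℤ :=
  Matrix.of fun i j =>
    if (i : ℕ) < g.natDegree then
      if (i : ℕ) ≤ (j : ℕ) ∧ (j : ℕ) ≤ (i : ℕ) + f.natDegree then
        f.coeff (f.natDegree + i - j)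
      else 0
    else
      if (i : ℕ) - g.natDegree ≤ (j : ℕ) ∧ (j : ℕ) ≤ (i : ℕ) - g.natDegree + g.natDegree then
        g.coeff (g.natDegree + ((i : ℕ) - g.natDegree) - j)
      else 0

/-- The resultant of two integer polynomials, as the determinant of their Sylvester matrix. -/
noncomputable def res (f g : Polynomial ℤ) : ℤ := (sylvesterMatrix f g).det

/-- `B` is a positive common denominator for the (unique) Bezout cofactors `p, q` in `ℚ[x]`
with `deg p < deg g`, `deg q < deg f` and `p*f + q*g = 1`, i.e. `B*p, B*q` lie in `ℤ[x]`. -/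
def IsBezoutDenom (f g : Polynomial ℤ) (B : ℤ) : Prop :=
  0 < B ∧ ∃ p q : Polynomial ℚ,
    p.degree < (g.map (Int.castRingHom ℚ)).degree ∧
    q.degree < (f.map (Int.castRingHom ℚ)).degree ∧
    p * f.map (Int.castRingHom ℚ) + q * g.map (Int.castRingHom ℚ) = 1 ∧
    (∃ P : Polynomial ℤ, P.map (Int.castRingHom ℚ) = Polynomial.C (B : ℚ) * p) ∧
    (∃ Q : Polynomial ℤ, Q.map (Int.castRingHom ℚ) = Polynomial.C (B : ℚ) * q)

/-!
`res` is Mathlib's `Polynomial.resultant`. Clearing denominators in the Bezout identity gives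
`P f + Q g = B` with `P, Q ∈ ℤ[X]`. The resultant `Res(f, ·)` is multiplicative and unchanged
by adding `f P` when `deg P + deg f ≤ deg Q + deg g`, which holds because the leading terms of
`P f` and `Q g` cancel. Hence for monic `f`,
`Res(f, Q) Res(f, g) = Res(f, Q g) = Res(f, P f + Q g) = Res(f, B) = B ^ deg f`,
and symmetrically `Res(f, g) = ± Res(g, f)` divides `B ^ deg g`.
-/

open Matrix

theorem sylvesterMatrix_eq_submatrix_transpose_sylvester (f g : ℤ[X]) :
    sylvesterMatrix f g =
      (sylvester f g f.natDegree g.natDegree)ᵀ.submatrix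
        (Fin.revPerm.trans (finCongr (add_comm _ _)))
        (Fin.revPerm.trans (finCongr (add_comm _ _))) := by
  ext i j
  have hi := i.2
  have hj := j.2
  simp only [sylvesterMatrix, sylvester, Matrix.of_apply, Matrix.submatrix_apply,
    Matrix.transpose_apply, Equiv.trans_apply, Fin.revPerm_apply, finCongr_apply, Fin.addCases,
    Set.mem_Icc, Fin.val_cast, Fin.val_rev, Fin.val_castLT, Fin.val_subNat, eq_rec_constant]
  split_ifs <;> first | rfl | omega | (congr 1; omega)

theorem res_eq_resultant (f g : ℤ[X]) : res f g = resultant f g := by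
  rw [res, sylvesterMatrix_eq_submatrix_transpose_sylvester, det_submatrix_equiv_self,
    det_transpose, resultant]

namespace Polynomial

variable {R : Type*} [CommRing R]

theorem natDegree_mul_le_of_mul_add_mul_eq_C {f g p q : R[X]} {b : R}
    (hf : f.Monic) (hp : p ≠ 0) (h : p * f + q * g = C b) :
    p.natDegree + f.natDegree ≤ q.natDegree + g.natDegree := by
  nontriviality R
  rw [add_comm, ← hf.natDegree_mul' hp, hf.natDegree_mul_comm]
  refine le_trans ?_ natDegree_mul_le
  by_contra! hlt
  have := natDegree_add_eq_left_of_natDegree_lt hlt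
  rw [h, natDegree_C] at this
  omega

theorem resultant_dvd_pow_of_mul_add_mul_eq_C {f g p q : R[X]} {b : R}
    (hf : f.Monic) (h : p * f + q * g = C b) : resultant f g ∣ b ^ f.natDegree := by
  have hqg : resultant f (q * g) f.natDegree (q.natDegree + g.natDegree) =
      resultant f (C b) f.natDegree (q.natDegree + g.natDegree) := by
    by_cases hp : p = 0
    · rw [← h, hp, zero_mul, zero_add]
    · rw [← h, add_comm (p * f), mul_comm p, resultant_add_mul_right _ _ _ _ _
        (natDegree_mul_le_of_mul_add_mul_eq_C hf hp h) le_rfl]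
  rw [resultant_mul_right f q g _ le_rfl, resultant_C_right, hf.coeff_natDegree, one_pow,
    one_mul] at hqg
  exact Dvd.intro_left _ hqg

end Polynomial

theorem IsBezoutDenom.exists_mul_add_mul_eq_C {f g : ℤ[X]} {B : ℤ} (hB : IsBezoutDenom f g B) :
    ∃ P Q : ℤ[X], P * f + Q * g = C B := by
  obtain ⟨-, p, q, -, -, hpq, ⟨P, hP⟩, ⟨Q, hQ⟩⟩ := hB
  refine ⟨P, Q, map_injective (Int.castRingHom ℚ) Int.cast_injective ?_⟩
  rw [Polynomial.map_add, Polynomial.map_mul, Polynomial.map_mul, hP, hQ, Polynomial.map_C,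
    mul_assoc, mul_assoc, ← mul_add, hpq, mul_one]
  rfl

theorem statement_17_general (f g : Polynomial ℤ)
    (hfm : f.Monic) (hgm : g.Monic)
    (B : ℤ) (hB : IsBezoutDenom f g B) :
    |res f g| ∣ B ^ min f.natDegree g.natDegree := by
  obtain ⟨P, Q, hPQ⟩ := hB.exists_mul_add_mul_eq_C
  have hdvd_f : resultant f g ∣ B ^ f.natDegree := resultant_dvd_pow_of_mul_add_mul_eq_C hfm hPQ
  have hdvd_g : resultant f g ∣ B ^ g.natDegree := by
    rw [resultant_comm]
    exact (isUnit_neg_one.pow _).mul_left_dvd.mpr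
      (resultant_dvd_pow_of_mul_add_mul_eq_C hgm (by rwa [add_comm]))
  rw [abs_dvd, res_eq_resultant]
  rcases min_choice f.natDegree g.natDegree with h | h <;> rw [h]
  exacts [hdvd_f, hdvd_g]

theorem statement_17 (f g : Polynomial ℤ)
    (hf : 0 < f.natDegree) (hg : 0 < g.natDegree)
    (hcop : IsCoprime (f.map (Int.castRingHom ℚ)) (g.map (Int.castRingHom ℚ)))
    (hfm : f.Monic) (hgm : g.Monic)
    (B : ℤ) (hB : IsBezoutDenom f g B)
    (hBmin : ∀ B' : ℤ, IsBezoutDenom f g B' → B ≤ B') :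
    |res f g| ∣ B ^ min f.natDegree g.natDegree :=
  statement_17_general f g hfm hgm B hB
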